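/- Suppose each of the functions f₁, …, f_T : (ℝ^d)^h → ℝ is G-Lipschitz. Then C_T : (ℝ^d)^T → ℝ, C_T(x) = Σ_{t=1}^T f_t(x_{t−h+1:t}), is G√(Th)-Lipschitz with respect to the Euclidean norm on (ℝ^d)^T: |C_T(x) − C_T(y)| ≤ G√(Th)·‖x − y‖ for all x, y ∈ (ℝ^d)^T. (This is Lemma 1(b), Lipschitz part, of the paper.) -/

import Mathlib

/-!
Every coordinate `x_s` occurs in at most `h` of the windows, and padding entries agree for `x`
and `y`, so `∑ₜ ‖x_{t-h+1:t} - y_{t-h+1:t}‖² ≤ h ‖x - y‖²`. Bounding each term of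
`C_T x - C_T y` by `G ‖x_{t-h+1:t} - y_{t-h+1:t}‖` and applying Cauchy–Schwarz to the `T`
terms gives the factor `√T · √h`.
-/

/-- The sequence `x₁, …, x_T` padded with `x̄₀` for indices `t ≤ 0` (indices are `1`-based,
given as integers). -/
noncomputable def pad {d : ℕ} (T : ℕ) (xbar : EuclideanSpace ℝ (Fin d))
    (x : Fin T → EuclideanSpace ℝ (Fin d)) (t : ℤ) : EuclideanSpace ℝ (Fin d) :=
  if ht : 1 ≤ t ∧ t ≤ T then x ⟨(t - 1).toNat, by omega⟩ else xbar

/-- The `t`-th window `x_{t-h+1:t} = (x_{t-h+1}, …, x_t) ∈ (ℝ^d)^h`, where the product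
space carries the Euclidean (`L²`) norm. -/
noncomputable def window {d : ℕ} (h T : ℕ) (xbar : EuclideanSpace ℝ (Fin d))
    (x : Fin T → EuclideanSpace ℝ (Fin d)) (t : ℤ) :
    PiLp 2 (fun _ : Fin h => EuclideanSpace ℝ (Fin d)) :=
  WithLp.toLp 2 (fun i => pad T xbar x (t - h + 1 + i))

open Finset

theorem nonneg_of_abs_sub_le_mul_norm {E : Type*} [NormedAddCommGroup E] [Nontrivial E]
    {G : ℝ} {f : E → ℝ} (hf : ∀ z w, |f z - f w| ≤ G * ‖z - w‖) : 0 ≤ G := by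
  obtain ⟨z, hz⟩ := exists_ne (0 : E)
  have hGz : 0 ≤ G * ‖z‖ := by simpa only [sub_zero] using (abs_nonneg _).trans (hf z 0)
  exact nonneg_of_mul_nonneg_left hGz (norm_pos_iff.mpr hz)

theorem sum_norm_le_sqrt_card_mul {ι E : Type*} [Fintype ι] [SeminormedAddCommGroup E]
    (v : ι → E) : ∑ i, ‖v i‖ ≤ √(Fintype.card ι) * √(∑ i, ‖v i‖ ^ 2) := by
  simpa using Real.sum_mul_le_sqrt_mul_sqrt univ (fun _ => (1 : ℝ)) (fun i => ‖v i‖)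

theorem abs_sum_sub_sum_le {ι E : Type*} [Fintype ι] [SeminormedAddCommGroup E] {G : ℝ}
    (hG : 0 ≤ G) {f : ι → E → ℝ} (hf : ∀ i z w, |f i z - f i w| ≤ G * ‖z - w‖) (z w : ι → E) :
    |∑ i, f i (z i) - ∑ i, f i (w i)| ≤
      G * √(Fintype.card ι) * √(∑ i, ‖z i - w i‖ ^ 2) :=
  calc |∑ i, f i (z i) - ∑ i, f i (w i)|
      ≤ ∑ i, |f i (z i) - f i (w i)| := by
        rw [← sum_sub_distrib]; exact abs_sum_le_sum_abs _ _
    _ ≤ ∑ i, G * ‖z i - w i‖ := sum_le_sum fun i _ => hf i _ _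
    _ ≤ G * (√(Fintype.card ι) * √(∑ i, ‖z i - w i‖ ^ 2)) := by
        rw [← mul_sum]; exact mul_le_mul_of_nonneg_left (sum_norm_le_sqrt_card_mul _) hG
    _ = _ := (mul_assoc _ _ _).symm

theorem sum_comp_le_sum_of_injOn {ι κ : Type*} [DecidableEq κ] {s : Finset ι} {t : Finset κ}
    {φ : ι → κ} (hφ : Set.InjOn φ s) {q : κ → ℝ} (hq : ∀ k, 0 ≤ q k)
    (hsupp : ∀ k, q k ≠ 0 → k ∈ t) : ∑ i ∈ s, q (φ i) ≤ ∑ k ∈ t, q k := by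
  rw [← sum_image hφ, ← sum_filter_ne_zero]
  exact sum_le_sum_of_subset_of_nonneg (fun k hk => hsupp k (mem_filter.mp hk).2)
    fun k _ _ => hq k

section Windows

variable {d T : ℕ} (xbar : EuclideanSpace ℝ (Fin d)) (x y : Fin T → EuclideanSpace ℝ (Fin d))

theorem pad_natCast_add_one (t : Fin T) : pad T xbar x ((t : ℤ) + 1) = x t := by
  rw [pad, dif_pos ⟨by omega, by omega⟩]
  exact congrArg x (Fin.ext (by simp))

theorem pad_of_notMem_Icc {k : ℤ} (hk : k ∉ Set.Icc 1 (T : ℤ)) : pad T xbar x k = xbar :=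
  dif_neg hk

theorem mem_image_natCast_add_one_of_pad_ne {k : ℤ} (hk : pad T xbar x k ≠ pad T xbar y k) :
    k ∈ univ.image fun t : Fin T => (t : ℤ) + 1 := by
  by_cases hkT : k ∈ Set.Icc 1 (T : ℤ)
  · obtain ⟨hk1, hkT⟩ := hkT
    refine mem_image.mpr ⟨⟨(k - 1).toNat, by omega⟩, mem_univ _, ?_⟩
    simp only [Int.pred_toNat]
    omega
  · exact absurd ((pad_of_notMem_Icc xbar x hkT).trans (pad_of_notMem_Icc xbar y hkT).symm) hk

theorem norm_window_sub_sq (h : ℕ) (t : ℤ) :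
    ‖window h T xbar x t - window h T xbar y t‖ ^ 2 =
      ∑ i : Fin h, ‖pad T xbar x (t - h + 1 + i) - pad T xbar y (t - h + 1 + i)‖ ^ 2 := by
  rw [PiLp.norm_sq_eq_of_L2]
  rfl

theorem sum_norm_window_sub_sq_le (h : ℕ) :
    ∑ t : Fin T, ‖window h T xbar x ((t : ℤ) + 1) - window h T xbar y ((t : ℤ) + 1)‖ ^ 2 ≤
      h * ∑ t, ‖x t - y t‖ ^ 2 := by
  set q : ℤ → ℝ := fun k => ‖pad T xbar x k - pad T xbar y k‖ ^ 2
  have hq_supp : ∀ k, q k ≠ 0 → k ∈ univ.image fun t : Fin T => (t : ℤ) + 1 := fun k hk =>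
    mem_image_natCast_add_one_of_pad_ne xbar x y fun hxy => hk (by simp [q, hxy])
  have hq_sum : ∑ k ∈ univ.image (fun t : Fin T => (t : ℤ) + 1), q k = ∑ t, ‖x t - y t‖ ^ 2 := by
    rw [sum_image fun a _ b _ hab => Fin.ext (by simpa using hab)]
    simp only [q, pad_natCast_add_one]
  calc ∑ t : Fin T, ‖window h T xbar x ((t : ℤ) + 1) - window h T xbar y ((t : ℤ) + 1)‖ ^ 2
      = ∑ i : Fin h, ∑ t : Fin T, q ((t : ℤ) + 1 - h + 1 + i) := by
        simp only [norm_window_sub_sq]; exact sum_comm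
    _ ≤ ∑ _i : Fin h, ∑ t, ‖x t - y t‖ ^ 2 := by
        refine sum_le_sum fun i _ =>
          (sum_comp_le_sum_of_injOn ?_ (fun k => sq_nonneg _) hq_supp).trans_eq hq_sum
        intro a _ b _ hab
        exact Fin.ext (by simpa using hab)
    _ = h * ∑ t, ‖x t - y t‖ ^ 2 := by simp

end Windows

/-- If each `f_t : (ℝ^d)^h → ℝ` is `G`-Lipschitz, then
`C_T x = ∑_{t=1}^T f_t (x_{t-h+1:t})` is `G√(Th)`-Lipschitz on `(ℝ^d)^T` with the
Euclidean norm. -/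
theorem CT_lipschitz {d h T : ℕ} (hd : 1 ≤ d) (hh : 1 ≤ h) (hT : 1 ≤ T)
    (xbar : EuclideanSpace ℝ (Fin d)) (G : ℝ)
    (f : Fin T → (PiLp 2 fun _ : Fin h => EuclideanSpace ℝ (Fin d)) → ℝ)
    (hf : ∀ t, ∀ z w, |f t z - f t w| ≤ G * ‖z - w‖) :
    ∀ x y : PiLp 2 fun _ : Fin T => EuclideanSpace ℝ (Fin d),
      |(∑ t : Fin T, f t (window h T xbar x ((t : ℤ) + 1))) -
          ∑ t : Fin T, f t (window h T xbar y ((t : ℤ) + 1))| ≤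
        G * Real.sqrt (T * h) * ‖x - y‖ := by
  intro x y
  have : Nonempty (Fin d) := Fin.pos_iff_nonempty.mp hd
  have : Nonempty (Fin h) := Fin.pos_iff_nonempty.mp hh
  have hG : 0 ≤ G := nonneg_of_abs_sub_le_mul_norm (hf ⟨0, hT⟩)
  calc _ ≤ G * √T * √(∑ t : Fin T,
          ‖window h T xbar x ((t : ℤ) + 1) - window h T xbar y ((t : ℤ) + 1)‖ ^ 2) := by
        simpa only [Fintype.card_fin] using abs_sum_sub_sum_le hG hf
          (fun t : Fin T => window h T xbar x ((t : ℤ) + 1))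
          (fun t => window h T xbar y ((t : ℤ) + 1))
    _ ≤ G * √T * √(h * ‖x - y‖ ^ 2) := by
        rw [PiLp.norm_sq_eq_of_L2]
        gcongr
        exact sum_norm_window_sub_sq_le xbar x y h
    _ = G * √(T * h) * ‖x - y‖ := by
        rw [Real.sqrt_mul (Nat.cast_nonneg _), Real.sqrt_mul (Nat.cast_nonneg _),
          Real.sqrt_sq (norm_nonneg _)]
        ring
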